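/- arXiv:2405.18828 — 5 statements merged into one kernel-verified Lean document; each statement's English description precedes it below -/
import Mathlib

section
/- Let d ≥ 1, A¹,…,A^d ∈ ℝ, E = argmax_i A^i, and suppose E ⊊ {1,…,d}. Let Δ = max_i A^i − max_{i∉E} A^i > 0. Then for all i and all M ≥ 0, |w_i(M) − (1/|E|)·1_{i∈E}| ≤ (1/|E|)·max(1, (d−|E|)/|E|)·exp(−√M·Δ), where w_i(M) = exp(√M A^i)/Σ_{l=1}^d exp(√M A^l). -/
set_option maxHeartbeats 1000000 in
/-- if the argmax set `E` of `A` is a proper subset of the indices and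
`Δ` is the gap between the maximum and the second largest distinct value, then the
softmax weights with temperature `√M` are close to the uniform distribution on `E`. -/
theorem stmt_1 (d : ℕ) (hd : 1 ≤ d) (A : Fin d → ℝ)
    (E : Finset (Fin d)) (hE : ∀ i, i ∈ E ↔ ∀ j, A j ≤ A i)
    (hEproper : E ≠ Finset.univ)
    (Amax : ℝ) (hAmax : ∀ i ∈ E, A i = Amax)
    (Amax2 : ℝ) (hAmax2le : ∀ i ∉ E, A i ≤ Amax2)
    (hAmax2mem : ∃ i ∉ E, A i = Amax2)
    (Δ : ℝ) (hΔ : Δ = Amax - Amax2)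
    (M : ℝ) (hM : 0 ≤ M) (i : Fin d) :
    |Real.exp (Real.sqrt M * A i) / (∑ l : Fin d, Real.exp (Real.sqrt M * A l))
        - (if i ∈ E then 1 / (E.card : ℝ) else 0)|
      ≤ (1 / (E.card : ℝ)) * max 1 (((d : ℝ) - (E.card : ℝ)) / (E.card : ℝ))
        * Real.exp (-(Real.sqrt M) * Δ) := by
  have : Nonempty (Fin d) := ⟨⟨0, hd⟩⟩
  have hEne : E.Nonempty := by
    obtain ⟨j, hj⟩ := Finite.exists_max A
    exact ⟨j, (hE j).2 hj⟩
  set s := Real.sqrt M with hs_def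
  have hs : 0 ≤ s := Real.sqrt_nonneg M
  set k : ℝ := (E.card : ℝ) with hk_def
  have hk0 : 0 < k := by
    rw [hk_def]; exact_mod_cast Finset.card_pos.mpr hEne
  have hkd' : k ≤ (d : ℝ) := by
    rw [hk_def]; exact_mod_cast (by simpa using E.card_le_univ : E.card ≤ d)
  set S := ∑ l : Fin d, Real.exp (s * A l) with hS_def
  set R := ∑ l ∈ Eᶜ, Real.exp (s * A l) with hR_def
  have hsplit : S = k * Real.exp (s * Amax) + R := by
    rw [hS_def, ← Finset.sum_add_sum_compl E]
    congr 1
    rw [Finset.sum_congr rfl (fun l hl => by rw [hAmax l hl]), Finset.sum_const,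
      nsmul_eq_mul]
  have hR0 : 0 ≤ R := Finset.sum_nonneg fun _ _ => (Real.exp_pos _).le
  have hkd : E.card ≤ d := by simpa using E.card_le_univ
  have hcompl : ((Eᶜ : Finset (Fin d)).card : ℝ) = (d : ℝ) - k := by
    rw [Finset.card_compl, Fintype.card_fin, Nat.cast_sub hkd]
  have hRle : R ≤ ((d : ℝ) - k) * Real.exp (s * Amax2) := by
    rw [← hcompl]
    calc R ≤ (Eᶜ : Finset (Fin d)).card • Real.exp (s * Amax2) := by
          apply Finset.sum_le_card_nsmul
          intro l hl
          exact Real.exp_le_exp.mpr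
            (mul_le_mul_of_nonneg_left (hAmax2le l (Finset.mem_compl.mp hl)) hs)
      _ = _ := nsmul_eq_mul _ _
  have hSge : k * Real.exp (s * Amax) ≤ S := by
    rw [hsplit]; linarith
  have hS0 : 0 < S := lt_of_lt_of_le (by positivity) hSge
  have hexpΔ : Real.exp (-s * Δ) = Real.exp (s * Amax2) / Real.exp (s * Amax) := by
    rw [← Real.exp_sub]; congr 1; rw [hΔ]; ring
  have hkne : k ≠ 0 := hk0.ne'
  have heS : Real.exp (s * Amax) ≠ 0 := (Real.exp_pos _).ne'
  have hmax0 : (0:ℝ) ≤ max 1 (((d : ℝ) - k) / k) := le_max_of_le_left zero_le_one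
  by_cases hi : i ∈ E
  · simp only [hi, if_true]
    rw [hAmax i hi]
    have hle : Real.exp (s * Amax) / S ≤ 1 / k := by
      rw [div_le_div_iff₀ hS0 hk0, one_mul]
      calc Real.exp (s * Amax) * k = k * Real.exp (s * Amax) := by ring
        _ ≤ S := hSge
    rw [abs_of_nonpos (by linarith)]
    have heq : -(Real.exp (s * Amax) / S - 1 / k) = R / (k * S) := by
      field_simp
      rw [hsplit]; ring
    rw [heq]
    have hdk : (0:ℝ) ≤ (d : ℝ) - k := by linarith
    have hstep : R / (k * S) ≤ (((d:ℝ) - k) * Real.exp (s * Amax2)) /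
        (k * (k * Real.exp (s * Amax))) := by
      apply div_le_div₀ (mul_nonneg hdk (Real.exp_pos _).le) hRle (by positivity)
      exact mul_le_mul_of_nonneg_left hSge hk0.le
    have heq2 : (1/k) * (((d:ℝ)-k)/k) * Real.exp (-s*Δ)
        = (((d:ℝ) - k) * Real.exp (s * Amax2)) / (k * (k * Real.exp (s * Amax))) := by
      rw [hexpΔ, div_mul_div_comm, div_mul_div_comm, one_mul, mul_assoc]
    rw [← heq2] at hstep
    refine hstep.trans ?_
    exact mul_le_mul_of_nonneg_right
      (mul_le_mul_of_nonneg_left (le_max_right _ _) (by positivity))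
      (Real.exp_pos _).le
  · simp only [hi, if_false, sub_zero]
    rw [abs_of_nonneg (by positivity)]
    have h1 : Real.exp (s * A i) / S ≤ Real.exp (s * Amax2) /
        (k * Real.exp (s * Amax)) := by
      exact div_le_div₀ (Real.exp_pos _).le
        (Real.exp_le_exp.mpr (mul_le_mul_of_nonneg_left (hAmax2le i hi) hs))
        (by positivity) hSge
    refine h1.trans ?_
    have h2 : Real.exp (s * Amax2) / (k * Real.exp (s * Amax))
        = (1 / k) * 1 * Real.exp (-s * Δ) := by
      rw [hexpΔ]; field_simp
    rw [h2]
    gcongr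
    exact le_max_left _ _
end

section
/- For any d ≥ 1 and η ∈ ℝ, the softmax function with temperature η, f : ℝ^d → ℝ^d defined by f(x)_i = exp(η x_i)/Σ_{l=1}^d exp(η x_l), is η-Lipschitz with respect to the Euclidean norm (i.e. ‖f(x) − f(y)‖₂ ≤ |η|·‖x − y‖₂ for all x, y ∈ ℝ^d). -/
/-! With `p = softmax η x`, the logarithmic derivative of `p i` is `η (v i - ∑ j, p j * v j)`, so the
Jacobian is `η (diag p - p pᵀ)`. Its `i`-th output is `η p i (v i - m)` with `m` the `p`-weighted
mean of `v`, and since `p i ≤ 1` and a variance is at most a second moment,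
`∑ i, (p i (v i - m))² ≤ ∑ i, p i (v i - m)² ≤ ∑ i, p i (v i)² ≤ ‖v‖²`. The Jacobian thus has
operator norm at most `|η|`, and the mean value inequality concludes. -/

open Finset Real

section
variable {ι : Type*} [Fintype ι]

-- Stated for `∑ i, p i ≤ 1` so that it also covers the empty index type.
theorem sum_sq_mul_sub_weightedMean_le (p v : ι → ℝ) (hp : ∀ i, 0 ≤ p i) (hp1 : ∑ i, p i ≤ 1) :
    ∑ i, (p i * (v i - ∑ j, p j * v j)) ^ 2 ≤ ∑ i, v i ^ 2 := by
  set m := ∑ j, p j * v j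
  have hp_le_one (i : ι) : p i ≤ 1 := (single_le_sum (fun j _ ↦ hp j) (mem_univ i)).trans hp1
  have hvariance : ∑ i, p i * (v i - m) ^ 2 = ∑ i, p i * v i ^ 2 - m ^ 2 * (2 - ∑ i, p i) := by
    have hexpand (i : ι) :
        p i * (v i - m) ^ 2 = p i * v i ^ 2 - 2 * m * (p i * v i) + m ^ 2 * p i := by ring
    simp only [hexpand, sum_add_distrib, sum_sub_distrib, ← mul_sum]
    ring
  calc ∑ i, (p i * (v i - m)) ^ 2
      ≤ ∑ i, p i * (v i - m) ^ 2 := by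
        gcongr with i
        rw [mul_pow]
        exact mul_le_mul_of_nonneg_right (by nlinarith [hp i, hp_le_one i]) (sq_nonneg _)
    _ ≤ ∑ i, p i * v i ^ 2 := by
        rw [hvariance]
        nlinarith [sq_nonneg m]
    _ ≤ ∑ i, v i ^ 2 := by
        gcongr with i
        nlinarith [hp i, hp_le_one i, sq_nonneg (v i)]

noncomputable def softmax (η : ℝ) (x : EuclideanSpace ℝ ι) : EuclideanSpace ℝ ι :=
  WithLp.toLp 2 fun i ↦ exp (η * x i) / ∑ l, exp (η * x l)

theorem softmax_apply (η : ℝ) (x : EuclideanSpace ℝ ι) (i : ι) :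
    softmax η x i = exp (η * x i) / ∑ l, exp (η * x l) := rfl

theorem softmax_nonneg (η : ℝ) (x : EuclideanSpace ℝ ι) (i : ι) : 0 ≤ softmax η x i := by
  rw [softmax_apply]; positivity

theorem sum_softmax_le_one (η : ℝ) (x : EuclideanSpace ℝ ι) : ∑ i, softmax η x i ≤ 1 := by
  simp only [softmax_apply, ← sum_div]
  exact div_self_le_one _

noncomputable def softmaxJacobian (η : ℝ) (p : ι → ℝ) :
    EuclideanSpace ℝ ι →L[ℝ] EuclideanSpace ℝ ι :=
  LinearMap.toContinuousLinearMap
    { toFun := fun v ↦ WithLp.toLp 2 fun i ↦ η * p i * (v i - ∑ j, p j * v j)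
      map_add' v w := by
        ext i
        simp only [PiLp.add_apply, mul_add, sum_add_distrib]
        ring
      map_smul' c v := by
        ext i
        simp only [PiLp.smul_apply, smul_eq_mul, RingHom.id_apply]
        simp_rw [mul_left_comm (p _) c, ← mul_sum]
        ring }

theorem softmaxJacobian_apply (η : ℝ) (p : ι → ℝ) (v : EuclideanSpace ℝ ι) (i : ι) :
    softmaxJacobian η p v i = η * p i * (v i - ∑ j, p j * v j) := rfl

theorem hasFDerivAt_softmax (η : ℝ) (x : EuclideanSpace ℝ ι) :
    HasFDerivAt (softmax η) (softmaxJacobian η (softmax η x)) x := by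
  rw [← hasFDerivWithinAt_univ, hasFDerivWithinAt_piLp]
  intro i
  rw [hasFDerivWithinAt_univ]
  have hsum_pos (y : EuclideanSpace ℝ ι) : 0 < ∑ l, exp (η * y l) :=
    sum_pos (fun l _ ↦ exp_pos _) ⟨i, mem_univ i⟩
  have hlinear (l : ι) : HasFDerivAt (fun y : EuclideanSpace ℝ ι ↦ η * y l)
      (η • PiLp.proj 2 (fun _ ↦ ℝ) l) x :=
    (PiLp.hasFDerivAt_apply (𝕜 := ℝ) 2 x l).const_mul η
  have hlogSumExp := (HasFDerivAt.fun_sum fun l _ ↦ (hlinear l).exp).log (hsum_pos x).ne'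
  have hlogSoftmax (y : EuclideanSpace ℝ ι) :
      softmax η y i = exp (η * y i - log (∑ l, exp (η * y l))) := by
    rw [exp_sub, exp_log (hsum_pos y), softmax_apply]
  simp_rw [hlogSoftmax]
  refine ((hlinear i).sub hlogSumExp).exp.congr_fderiv ?_
  ext v
  simp only [ContinuousLinearMap.comp_apply, PiLp.proj_apply, softmaxJacobian_apply, Pi.sub_apply,
    smul_apply, sub_apply, _root_.sum_apply, smul_eq_mul]
  simp_rw [← hlogSoftmax, softmax_apply, div_mul_eq_mul_div, ← sum_div, mul_left_comm _ η, ← mul_sum]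
  field_simp

theorem norm_softmaxJacobian_le (η : ℝ) {p : ι → ℝ} (hp : ∀ i, 0 ≤ p i) (hp1 : ∑ i, p i ≤ 1) :
    ‖softmaxJacobian η p‖ ≤ |η| := by
  refine ContinuousLinearMap.opNorm_le_bound _ (abs_nonneg η) fun v ↦ ?_
  rw [EuclideanSpace.norm_eq, EuclideanSpace.norm_eq, ← sqrt_sq_eq_abs, ← sqrt_mul (sq_nonneg η)]
  refine sqrt_le_sqrt ?_
  simp only [norm_eq_abs, sq_abs, softmaxJacobian_apply, mul_assoc, mul_pow η, ← mul_sum]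
  exact mul_le_mul_of_nonneg_left (sum_sq_mul_sub_weightedMean_le p v hp hp1) (sq_nonneg η)

theorem lipschitzWith_softmax (η : ℝ) : LipschitzWith ‖η‖₊ (softmax (ι := ι) η) := by
  rw [← lipschitzOnWith_univ]
  refine convex_univ.lipschitzOnWith_of_nnnorm_hasFDerivWithin_le
    (fun x _ ↦ (hasFDerivAt_softmax η x).hasFDerivWithinAt) fun x _ ↦ ?_
  rw [← NNReal.coe_le_coe, coe_nnnorm, coe_nnnorm, norm_eq_abs]
  exact norm_softmaxJacobian_le η (softmax_nonneg η x) (sum_softmax_le_one η x)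

end

theorem stmt_4_general (d : ℕ) (η : ℝ)
    (f : EuclideanSpace ℝ (Fin d) → EuclideanSpace ℝ (Fin d))
    (hf : ∀ (x : EuclideanSpace ℝ (Fin d)) (i : Fin d),
      f x i = Real.exp (η * x i) / ∑ l : Fin d, Real.exp (η * x l)) :
    ∀ x y : EuclideanSpace ℝ (Fin d), ‖f x - f y‖ ≤ |η| * ‖x - y‖ := by
  obtain rfl : f = softmax η := funext fun x ↦ PiLp.ext fun i ↦ hf x i
  intro x y
  simpa [dist_eq_norm] using (lipschitzWith_softmax η).dist_le_mul x y

/-- the softmax function with temperature `η` on `ℝ^d` is `η`-Lipschitz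
with respect to the Euclidean norm. -/
theorem stmt_4 (d : ℕ) (hd : 1 ≤ d) (η : ℝ)
    (f : EuclideanSpace ℝ (Fin d) → EuclideanSpace ℝ (Fin d))
    (hf : ∀ (x : EuclideanSpace ℝ (Fin d)) (i : Fin d),
      f x i = Real.exp (η * x i) / ∑ l : Fin d, Real.exp (η * x l)) :
    ∀ x y : EuclideanSpace ℝ (Fin d), ‖f x - f y‖ ≤ |η| * ‖x - y‖ :=
  stmt_4_general d η f hf
end

section
/- Under the ξ-balanced assumption (each class k satisfies N_k/N ≥ ξ) and assuming the output-layer expert aggregation satisfies the regret bound R_N ≤ C(b−a)√(ln|E|·N) for gains in [a,b], the network discrepancy satisfies, almost surely, Disc_N(w^K_{[N]}, X) ≥ max over all families q^K of probability vectors on Ĵ_L of Disc_N(q^K, X) − (C|K|/(ξ(|K|−1)))·√(ln|Ĵ_L|/N). -/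
/-- under the `ξ`-balanced assumption and the regret bound for the output
layer's expert aggregation (applied to the realized gains, which lie in
`[-1/(ξ(|K|-1)), 1/ξ]`, an interval of length `(1/ξ)·|K|/(|K|-1)`), the network
discrepancy of the learned weights `w` exceeds the network discrepancy of any constant
family of probability vectors `q^K` minus `(C|K|/(ξ(|K|-1)))·√(ln|Ĵ_L|/N)`. -/
theorem stmt_9 {K J : Type*} [Fintype K] [DecidableEq K] [Fintype J] [Nonempty J]
    (hK : 2 ≤ Fintype.card K)
    (N : ℕ) (hN : 1 ≤ N) (ξ C : ℝ) (hξ : 0 < ξ) (hC : 0 ≤ C)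
    (cls : ℕ → K)
    (Nk : K → ℕ)
    (hNk : ∀ k, Nk k = ((Finset.Icc 1 N).filter (fun m => cls m = k)).card)
    (hbal : ∀ k, ξ ≤ (Nk k : ℝ) / (N : ℝ))
    (x : ℕ → J → ℝ) (hx : ∀ m j, x m j ∈ Set.Icc (0 : ℝ) 1)
    (w : K → ℕ → J → ℝ)
    (hw0 : ∀ k m j, 0 ≤ w k m j) (hw1 : ∀ k m, ∑ j, w k m j = 1)
    (g : K → ℕ → J → ℝ)
    (hg : ∀ k m j, g k m j =
      if cls m = k then x m j * ((N : ℝ) / (Nk k : ℝ))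
      else -(x m j * ((N : ℝ) / (Nk (cls m) : ℝ)) * (1 / ((Fintype.card K : ℝ) - 1))))
    (hreg : ∀ k, ∀ q : J → ℝ, (∀ j, 0 ≤ q j) → (∑ j, q j) = 1 →
      (∑ m ∈ Finset.Icc 1 N, ∑ j, q j * g k m j)
          - (∑ m ∈ Finset.Icc 1 N, ∑ j, w k m j * g k m j)
        ≤ C * ((1 / ξ) * ((Fintype.card K : ℝ) / ((Fintype.card K : ℝ) - 1)))
            * Real.sqrt (Real.log (Fintype.card J) * N))
    (DiscK : (ℕ → J → ℝ) → K → ℝ)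
    (hDiscK : ∀ (v : ℕ → J → ℝ) (k : K), DiscK v k =
      (∑ m ∈ (Finset.Icc 1 N).filter (fun m => cls m = k),
          ∑ j, v m j * x m j) / (Nk k : ℝ)
        - (∑ k' ∈ Finset.univ.erase k,
            (∑ m ∈ (Finset.Icc 1 N).filter (fun m => cls m = k'),
              ∑ j, v m j * x m j) / (Nk k' : ℝ)) / ((Fintype.card K : ℝ) - 1)) :
    ∀ q : K → J → ℝ, (∀ k j, 0 ≤ q k j) → (∀ k, ∑ j, q k j = 1) →
      (∑ k, DiscK (w k) k) / (Fintype.card K : ℝ)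
        ≥ (∑ k, DiscK (fun _ => q k) k) / (Fintype.card K : ℝ)
          - (C * (Fintype.card K : ℝ) / (ξ * ((Fintype.card K : ℝ) - 1)))
              * Real.sqrt (Real.log (Fintype.card J) / N) := by

  intro q hq0 hq1
  have hN' : (0:ℝ) < N := by exact_mod_cast hN
  have hKc : (1:ℝ) < (Fintype.card K : ℝ) := by exact_mod_cast hK
  have hK1 : (0:ℝ) < (Fintype.card K : ℝ) - 1 := by linarith
  have hNkpos : ∀ k, (0:ℝ) < (Nk k : ℝ) := by
    intro k
    have h2 : ξ * N ≤ (Nk k : ℝ) := (le_div_iff₀ hN').mp (hbal k)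
    nlinarith
  have hlog : 0 ≤ Real.log (Fintype.card J) :=
    Real.log_nonneg (by exact_mod_cast Fintype.card_pos (α := J))
  have key : ∀ (v : ℕ → J → ℝ) (k : K),
      ∑ m ∈ Finset.Icc 1 N, ∑ j, v m j * g k m j = (N:ℝ) * DiscK v k := by
    intro v k
    have hsplit := Finset.sum_fiberwise (Finset.Icc 1 N) cls
      (fun m => ∑ j, v m j * g k m j)
    rw [← hsplit, hDiscK, ← Finset.add_sum_erase _ _ (Finset.mem_univ k)]
    have h1 : ∑ m ∈ (Finset.Icc 1 N).filter (fun m => cls m = k), ∑ j, v m j * g k m j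
        = (N:ℝ)/(Nk k : ℝ) *
          ∑ m ∈ (Finset.Icc 1 N).filter (fun m => cls m = k), ∑ j, v m j * x m j := by
      rw [Finset.mul_sum]
      refine Finset.sum_congr rfl fun m hm => ?_
      have hc : cls m = k := (Finset.mem_filter.mp hm).2
      rw [Finset.mul_sum]
      refine Finset.sum_congr rfl fun j _ => ?_
      rw [hg, if_pos hc]; ring
    have h2 : ∀ k' ∈ Finset.univ.erase k,
        ∑ m ∈ (Finset.Icc 1 N).filter (fun m => cls m = k'), ∑ j, v m j * g k m j
        = -((N:ℝ)/(Nk k' : ℝ) * (1/((Fintype.card K:ℝ)-1)) *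
          ∑ m ∈ (Finset.Icc 1 N).filter (fun m => cls m = k'), ∑ j, v m j * x m j) := by
      intro k' hk'
      have hne : k' ≠ k := (Finset.mem_erase.mp hk').1
      rw [Finset.mul_sum, ← Finset.sum_neg_distrib]
      refine Finset.sum_congr rfl fun m hm => ?_
      have hc : cls m = k' := (Finset.mem_filter.mp hm).2
      rw [Finset.mul_sum, ← Finset.sum_neg_distrib]
      refine Finset.sum_congr rfl fun j _ => ?_
      rw [hg, if_neg (by rw [hc]; exact hne), hc]; ring
    rw [h1, Finset.sum_congr rfl h2, Finset.sum_neg_distrib, mul_sub]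
    congr 1
    · ring
    · rw [Finset.sum_div, Finset.mul_sum]
      exact neg_inj.mpr (Finset.sum_congr rfl fun k' _ => by ring)
  have hsqrt : Real.sqrt (Real.log (Fintype.card J) * N)
      = Real.sqrt (Real.log (Fintype.card J) / N) * N := by
    rw [Real.sqrt_mul hlog, Real.sqrt_div hlog, div_mul_eq_mul_div, mul_div_assoc,
      Real.div_sqrt]
  set B : ℝ := (C * (Fintype.card K : ℝ) / (ξ * ((Fintype.card K : ℝ) - 1)))
      * Real.sqrt (Real.log (Fintype.card J) / N) with hB
  have hkb : ∀ k, DiscK (fun _ => q k) k ≤ DiscK (w k) k + B := by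
    intro k
    have h := hreg k (q k) (hq0 k) (hq1 k)
    rw [key (fun _ => q k) k, key (w k) k, hsqrt] at h
    have hconst : C * ((1 / ξ) * ((Fintype.card K : ℝ) / ((Fintype.card K : ℝ) - 1)))
        = C * (Fintype.card K : ℝ) / (ξ * ((Fintype.card K : ℝ) - 1)) := by
      field_simp
    rw [hconst] at h
    have h2 : (N:ℝ) * DiscK (fun _ => q k) k ≤ (N:ℝ) * (DiscK (w k) k + B) := by
      rw [mul_add]
      have : (N:ℝ) * B = C * (Fintype.card K : ℝ) / (ξ * ((Fintype.card K : ℝ) - 1))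
          * Real.sqrt (Real.log (Fintype.card J) / N) * N := by rw [hB]; ring
      linarith [h, this.ge]
    exact le_of_mul_le_mul_left (by linarith [h2]) hN'
  have hsum : ∑ k, DiscK (fun _ => q k) k ≤ (∑ k, DiscK (w k) k) + (Fintype.card K : ℝ) * B := by
    calc ∑ k, DiscK (fun _ => q k) k ≤ ∑ k, (DiscK (w k) k + B) :=
          Finset.sum_le_sum fun k _ => hkb k
      _ = (∑ k, DiscK (w k) k) + (Fintype.card K : ℝ) * B := by
          rw [Finset.sum_add_distrib, Finset.sum_const, Finset.card_univ, nsmul_eq_mul]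
  have hKpos : (0:ℝ) < (Fintype.card K : ℝ) := by linarith
  rw [ge_iff_le, sub_le_iff_le_add, div_le_iff₀ hKpos, add_mul, div_mul_cancel₀ _ hKpos.ne']
  linarith [hsum]
end

section
/- The VC-dimension of the hypothesis class H = {1_F : F ⊆ J̄_L}, where for a binary feature vector o ∈ {0,1}^I one sets 1_F(o) = 1 iff there exists j_S ∈ F with S ⊆ {i : o_i = 1}, equals |J̄_L|, provided all sets S indexing neurons of J̄_L are distinct subsets of I of the same cardinality 2^L. -/
/-- the VC-dimension of the hypothesis class
`H = {1_F : F ⊆ J̄_L}` (where `1_F(o) = 1` iff some `S ∈ F` satisfies `S ⊆ support o`)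
equals `|J̄_L|`, provided all sets indexing neurons of `J̄_L` are distinct subsets of
`I` of the same cardinality `2^L`.  The VC-dimension, the size of the largest shattered
set of binary feature vectors, is expressed via `IsGreatest`. -/
theorem stmt_12 {I : Type*} [Fintype I] [DecidableEq I] (L : ℕ)
    (JL : Finset (Finset I)) (hcard : ∀ S ∈ JL, S.card = 2 ^ L) :
    IsGreatest {n : ℕ | ∃ E : Finset (I → Bool), E.card = n ∧
      ∀ P ⊆ E, ∃ F ⊆ JL, ∀ o ∈ E,
        ((∃ S ∈ F, ∀ i ∈ S, o i = true) ↔ o ∈ P)} JL.card := by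
  constructor
  · -- membership: E = indicator vectors of sets in JL
    refine ⟨JL.image (fun S i => decide (i ∈ S)), ?_, ?_⟩
    · rw [Finset.card_image_of_injOn]
      intro S _ T _ h
      ext i
      have := congrFun h i
      simpa using this
    · intro P hP
      refine ⟨JL.filter (fun S => (fun i => decide (i ∈ S)) ∈ P),
        Finset.filter_subset _ _, ?_⟩
      intro o ho
      simp only [Finset.mem_image] at ho
      obtain ⟨S, hS, rfl⟩ := ho
      constructor
      · rintro ⟨T, hT, hsub⟩
        rw [Finset.mem_filter] at hT
        have hTS : T ⊆ S := fun i hi => by simpa using hsub i hi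
        have : T = S := Finset.eq_of_subset_of_card_le hTS
          (by rw [hcard S hS, hcard T hT.1])
        subst this
        exact hT.2
      · intro hmem
        exact ⟨S, Finset.mem_filter.mpr ⟨hS, hmem⟩, fun i hi => by simp [hi]⟩
  · -- upper bound
    rintro n ⟨E, rfl, hshat⟩
    classical
    choose F hF1 hF2 using hshat
    set g : Finset (I → Bool) → Finset (Finset I) :=
      fun P => if h : P ⊆ E then F P h else ∅ with hg
    have hinj : Set.InjOn g ↑E.powerset := by
      intro P hPmem Q hQmem hPQ
      rw [Finset.coe_powerset, Set.mem_preimage, Set.mem_powerset_iff] at hPmem hQmem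
      replace hPmem := Finset.coe_subset.mp hPmem
      replace hQmem := Finset.coe_subset.mp hQmem
      ext o
      by_cases ho : o ∈ E
      · have h1 := hF2 P hPmem o ho
        have h2 := hF2 Q hQmem o ho
        rw [hg] at hPQ
        simp only [dif_pos hPmem, dif_pos hQmem] at hPQ
        rw [hPQ] at h1
        constructor
        · intro h; exact h2.mp (h1.mpr h)
        · intro h; exact h1.mp (h2.mpr h)
      · constructor
        · intro h; exact absurd (hPmem h) ho
        · intro h; exact absurd (hQmem h) ho
    have hmaps : ∀ P ∈ (E.powerset : Finset (Finset (I → Bool))),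
        g P ∈ JL.powerset := by
      intro P hP
      rw [Finset.mem_powerset] at hP ⊢
      rw [hg]
      simp only [dif_pos hP]
      exact hF1 P hP
    have hcardle := Finset.card_le_card_of_injOn g hmaps hinj
    rw [Finset.card_powerset, Finset.card_powerset] at hcardle
    exact (Nat.pow_le_pow_iff_right one_lt_two).mp hcardle
end

section
/- Feature discrepancy computation under class decomposition: under binary correlations with common cardinality C = |O^S| for all S, and class decomposition k = ⋃_{S∈E^k} O^S with E^k maximal, the feature discrepancy Disc^{j_S→k} = ρ^k(S) − average over k'≠k of ρ^{k'}(S) equals C·p/n^k when S ∈ E^k (where n^k = |k|), and is at most (C−1)·p/n^k when S ∉ E^k. Consequently argmax_{j_S ∈ J̄_L} Disc^{j_S→k} = E^k. -/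
/-- feature discrepancy computation under class decomposition.  Under
binary correlations with common cardinality `C = |O^S|` and the (maximal) class
decomposition `k = ⋃_{S ∈ E^k} O^S`, the feature discrepancy
`Disc^{j_S→k} = ρ^k(S) - (1/(|K|-1)) Σ_{k'≠k} ρ^{k'}(S)` equals `C·p/n^k` for
`S ∈ E^k` and is at most `(C-1)·p/n^k` for `S ∈ J̄_L \ E^k`; consequently the argmax
over `J̄_L` of the feature discrepancy is exactly `E^k`. -/
theorem stmt_17 {I O K : Type*} [Fintype I] [Fintype O] [Fintype K]
    [DecidableEq I] [DecidableEq O] [DecidableEq K]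
    (hK : 2 ≤ Fintype.card K)
    (cls : O → K) (hcls : ∀ k : K, ∃ o, cls o = k)
    (JL : Finset (Finset I)) (ρ : O → Finset I → ℝ)
    (p : ℝ) (hp : 0 < p)
    (hbin : ∀ S ∈ JL, ∀ o, ρ o S = 0 ∨ ρ o S = p)
    (OS : Finset I → Finset O) (hOS : ∀ S o, o ∈ OS S ↔ ρ o S = p)
    (C : ℕ) (hC : ∀ S ∈ JL, (OS S).card = C)
    (Ek : K → Finset (Finset I)) (hEk : ∀ k, Ek k ⊆ JL)
    (hdecomp : ∀ (k : K) (o : O), cls o = k ↔ ∃ S ∈ Ek k, o ∈ OS S)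
    (hmax : ∀ (k : K), ∀ S ∈ JL, (∀ o ∈ OS S, cls o = k) → S ∈ Ek k)
    (nk : K → ℕ) (hnk : ∀ k, nk k = (Finset.univ.filter (fun o => cls o = k)).card)
    (ρk : K → Finset I → ℝ)
    (hρk : ∀ k S,
      ρk k S = (∑ o ∈ Finset.univ.filter (fun o => cls o = k), ρ o S) / (nk k : ℝ))
    (Disc : Finset I → K → ℝ)
    (hDisc : ∀ S k, Disc S k = ρk k S
      - (∑ k' ∈ Finset.univ.erase k, ρk k' S) / ((Fintype.card K : ℝ) - 1))
    (k : K) :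
    (∀ S ∈ Ek k, Disc S k = (C : ℝ) * p / (nk k : ℝ))
    ∧ (∀ S ∈ JL, S ∉ Ek k → Disc S k ≤ ((C : ℝ) - 1) * p / (nk k : ℝ))
    ∧ (∀ S ∈ JL, ((∀ S' ∈ JL, Disc S' k ≤ Disc S k) ↔ S ∈ Ek k)) := by

  classical
  have hnkpos : ∀ k' : K, (0:ℝ) < (nk k' : ℝ) := by
    intro k'
    obtain ⟨o, ho⟩ := hcls k'
    rw [hnk]
    exact_mod_cast Finset.card_pos.mpr ⟨o, by simp [ho]⟩
  have hKpos : (0:ℝ) < (Fintype.card K : ℝ) - 1 := by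
    have : (2:ℝ) ≤ Fintype.card K := by exact_mod_cast hK
    linarith
  have hρ' : ∀ S ∈ JL, ∀ o, ρ o S = if o ∈ OS S then p else 0 := by
    intro S hS o
    rcases hbin S hS o with h | h
    · by_cases hm : o ∈ OS S
      · have := (hOS S o).mp hm
        rw [h] at this; linarith
      · simp [hm, h]
    · simp [h, (hOS S o).mpr h]
  have hρk' : ∀ S ∈ JL, ∀ k',
      ρk k' S = p * (((OS S).filter (fun o => cls o = k')).card : ℝ) / (nk k' : ℝ) := by
    intro S hS k'
    rw [hρk]
    congr 1
    have hcards : ((Finset.univ.filter (fun o => cls o = k')).filter (fun o => o ∈ OS S)).card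
        = ((OS S).filter (fun o => cls o = k')).card := by
      congr 1
      ext o
      simp [and_comm]
    calc ∑ o ∈ Finset.univ.filter (fun o => cls o = k'), ρ o S
        = ∑ o ∈ Finset.univ.filter (fun o => cls o = k'), (if o ∈ OS S then p else 0) :=
          Finset.sum_congr rfl fun o _ => hρ' S hS o
      _ = ∑ _o ∈ (Finset.univ.filter (fun o => cls o = k')).filter (fun o => o ∈ OS S), p :=
          (Finset.sum_filter _ _).symm
      _ = p * (((OS S).filter (fun o => cls o = k')).card : ℝ) := by
          rw [Finset.sum_const, nsmul_eq_mul, mul_comm, hcards]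
  -- nonnegativity of ρk
  have hρknn : ∀ S ∈ JL, ∀ k', 0 ≤ ρk k' S := by
    intro S hS k'
    rw [hρk' S hS k']
    positivity
  -- part 1
  have part1 : ∀ S ∈ Ek k, Disc S k = (C : ℝ) * p / (nk k : ℝ) := by
    intro S hS
    have hSJ : S ∈ JL := hEk k hS
    have hall : ∀ o ∈ OS S, cls o = k := fun o ho => (hdecomp k o).mpr ⟨S, hS, ho⟩
    have hfk : (OS S).filter (fun o => cls o = k) = OS S :=
      Finset.filter_true_of_mem hall
    have hmain : ρk k S = (C : ℝ) * p / (nk k : ℝ) := by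
      rw [hρk' S hSJ k, hfk, hC S hSJ, mul_comm]
    have hother : ∀ k' ∈ Finset.univ.erase k, ρk k' S = 0 := by
      intro k' hk'
      have hne : k' ≠ k := (Finset.mem_erase.mp hk').1
      have : (OS S).filter (fun o => cls o = k') = ∅ := by
        apply Finset.filter_false_of_mem
        intro o ho
        rw [hall o ho]
        exact fun h => hne h.symm
      rw [hρk' S hSJ k', this]
      simp
    rw [hDisc, Finset.sum_eq_zero hother, hmain]
    rw [zero_div, sub_zero]
  -- part 2
  have part2 : ∀ S ∈ JL, S ∉ Ek k → Disc S k ≤ ((C : ℝ) - 1) * p / (nk k : ℝ) := by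
    intro S hS hnEk
    obtain ⟨o, ho, hco⟩ : ∃ o ∈ OS S, cls o ≠ k := by
      by_contra h
      push_neg at h
      exact hnEk (hmax k S hS h)
    have hss : (OS S).filter (fun o => cls o = k) ⊂ OS S := by
      refine ⟨Finset.filter_subset _ _, fun hsub => ?_⟩
      have := hsub ho
      exact hco (Finset.mem_filter.mp this).2
    have hcard : ((OS S).filter (fun o => cls o = k)).card < C := by
      rw [← hC S hS]
      exact Finset.card_lt_card hss
    have hcardR : (((OS S).filter (fun o => cls o = k)).card : ℝ) ≤ (C : ℝ) - 1 := by
      have : ((OS S).filter (fun o => cls o = k)).card + 1 ≤ C := hcard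
      have := (Nat.cast_le (α := ℝ)).mpr this
      push_cast at this
      linarith
    have h1 : ρk k S ≤ ((C : ℝ) - 1) * p / (nk k : ℝ) := by
      rw [hρk' S hS k]
      exact (div_le_div_iff_of_pos_right (hnkpos k)).mpr (by nlinarith [hp.le])
    have h2 : 0 ≤ (∑ k' ∈ Finset.univ.erase k, ρk k' S) / ((Fintype.card K : ℝ) - 1) := by
      apply div_nonneg _ hKpos.le
      exact Finset.sum_nonneg fun k' _ => hρknn S hS k'
    rw [hDisc]
    linarith
  refine ⟨part1, part2, ?_⟩
  intro S hS
  constructor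
  · intro hmaxS
    by_contra hnEk
    obtain ⟨ok, hok⟩ := hcls k
    obtain ⟨S0, hS0, -⟩ := (hdecomp k ok).mp hok
    have e1 : Disc S0 k = (C : ℝ) * p / (nk k : ℝ) := part1 S0 hS0
    have e2 : Disc S k ≤ ((C : ℝ) - 1) * p / (nk k : ℝ) := part2 S hS hnEk
    have := hmaxS S0 (hEk k hS0)
    have hlt : ((C : ℝ) - 1) * p / (nk k : ℝ) < (C : ℝ) * p / (nk k : ℝ) :=
      (div_lt_div_iff_of_pos_right (hnkpos k)).mpr (by nlinarith)
    linarith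
  · intro hSEk S' hS'
    by_cases h' : S' ∈ Ek k
    · rw [part1 S hSEk, part1 S' h']
    · have := part2 S' hS' h'
      have : ((C : ℝ) - 1) * p / (nk k : ℝ) ≤ (C : ℝ) * p / (nk k : ℝ) :=
        (div_le_div_iff_of_pos_right (hnkpos k)).mpr (by nlinarith)
      rw [part1 S hSEk]
      linarith [part2 S' hS' h']
end
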